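/- arXiv:1902.10325 — 3 statements merged into one kernel-verified Lean document; each statement's English description precedes it below -/
import Mathlib

section
/- Let X be a Polish space, (Ξ, 𝒜, ℙ) a complete probability space, T : Ξ → Ξ an ergodic measure-preserving transformation, M : Ξ ⇉ X a measurable set-valued map with closed values, g : X → ℝ ∪ {+∞} lower semicontinuous, and g_n : X → ℝ ∪ {+∞} a sequence of lower semicontinuous functions converging continuously to g. Define f_n(ξ, x) := g_n(x) + δ_{E_n(ξ)}(x), where E_n(ξ) := ⋂_{k=1}^n M(T^k(ξ)), and f(x) := g(x) + δ_{M_as}(x), where M_as := {x ∈ X : x ∈ M(ξ) for ℙ-a.e. ξ}. Then for ℙ-a.e. ξ ∈ Ξ, the functions f_n(ξ, ·) epi-converge to f. -/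
open Filter Topology MeasureTheory Set

noncomputable section

/-- Epi-convergence of a sequence of extended-real-valued functions on a metric space:
for every `x`, (a) `liminf f n (u n) ≥ g x` along every sequence `u → x`, and
(b) `limsup f n (u n) ≤ g x` along some sequence `u → x`. -/
def EpiConv {X : Type*} [MetricSpace X] (f : ℕ → X → EReal) (g : X → EReal) : Prop :=
  ∀ x : X,
    (∀ u : ℕ → X, Tendsto u atTop (𝓝 x) → g x ≤ atTop.liminf fun n => f n (u n)) ∧
    (∃ u : ℕ → X, Tendsto u atTop (𝓝 x) ∧ (atTop.limsup fun n => f n (u n)) ≤ g x)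

/-- Continuous convergence: `f n (u n) → g x` for every `x` and every sequence `u → x`. -/
def ContConv {X : Type*} [MetricSpace X] (f : ℕ → X → EReal) (g : X → EReal) : Prop :=
  ∀ x : X, ∀ u : ℕ → X, Tendsto u atTop (𝓝 x) →
    Tendsto (fun n => f n (u n)) atTop (𝓝 (g x))

/-- Infimal value of `h` on `C`. -/
def vOn {X : Type*} (h : X → EReal) (C : Set X) : EReal := ⨅ x ∈ C, h x

open Classical in
/-- ε-infimal value of `h` on `C`: `inf_C h + ε` if `inf_C h > -∞`, and `-1/ε` otherwise
(with the convention `1/0 = +∞`, so `-1/0 = -∞`). -/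
def vEpsOn {X : Type*} (h : X → EReal) (C : Set X) (ε : ℝ) : EReal :=
  if vOn h C = ⊥ then (if ε = 0 then ⊥ else ((-ε⁻¹ : ℝ) : EReal))
  else vOn h C + (ε : EReal)

/-- ε-argmin of `h` on `C`: the points of `C` where `h` is below the ε-infimal value. -/
def argminOn {X : Type*} (h : X → EReal) (C : Set X) (ε : ℝ) : Set X :=
  {x ∈ C | h x ≤ vEpsOn h C ε}

/-- Painlevé–Kuratowski outer limit: points whose distance to `S n` has liminf 0. -/
def outerLim {X : Type*} [MetricSpace X] (S : ℕ → Set X) : Set X :=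
  {x | atTop.liminf (fun n => EMetric.infEdist x (S n)) = 0}

/-- Painlevé–Kuratowski inner limit: points whose distance to `S n` has limsup 0. -/
def innerLim {X : Type*} [MetricSpace X] (S : ℕ → Set X) : Set X :=
  {x | atTop.limsup (fun n => EMetric.infEdist x (S n)) = 0}

open Classical in
/-- Indicator function `δ_A`: `0` on `A`, `+∞` off `A`. -/
def delta {X : Type*} (A : Set X) : X → EReal := fun x => if x ∈ A then 0 else ⊤

/-- The sequence `g n` is eventually level-compact on the sets `C n`: for every level `α`
there is `N` such that the union over `n ≥ N` of the `α`-sublevel sets of `g n` on `C n`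
is relatively compact. -/
def EvLevelCompact {X : Type*} [MetricSpace X] (g : ℕ → X → EReal) (C : ℕ → Set X) : Prop :=
  ∀ α : ℝ, ∃ N : ℕ, IsCompact (closure (⋃ n ∈ Ici N, {x ∈ C n | g n x ≤ (α : EReal)}))

/-- Measurability of a set-valued map: preimages of open sets are measurable. -/
def MeasurableMultifun {Ξ X : Type*} [MeasurableSpace Ξ] [TopologicalSpace X]
    (M : Ξ → Set X) : Prop :=
  ∀ U : Set X, IsOpen U → MeasurableSet {ξ | (M ξ ∩ U).Nonempty}

/-- `P` is the countable product `ℙ^∞` of the probability measure `ℙ`: every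
finite-dimensional cylinder has product measure. -/
def IsProductMeasure {Ξ : Type*} [MeasurableSpace Ξ] (P : Measure (ℕ → Ξ))
    (ℙ : Measure Ξ) : Prop :=
  ∀ (s : Finset ℕ) (A : ℕ → Set Ξ), (∀ i, MeasurableSet (A i)) →
    P {ω | ∀ i ∈ s, ω i ∈ A i} = ∏ i ∈ s, ℙ (A i)

/-- Moreau envelope `e_λ g`. -/
def moreau {d : ℕ} (g : EuclideanSpace ℝ (Fin d) → EReal) (lam : ℝ)
    (x : EuclideanSpace ℝ (Fin d)) : EReal :=
  ⨅ u, g u + ((‖x - u‖ ^ 2 / (2 * lam) : ℝ) : EReal)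

/-!
Almost surely `⋂_{k ≥ 1} M (T^k ξ) = M_as`. A point outside `M_as` has a basic open
neighbourhood `U` that `M ζ` misses for `ζ` in a set of positive measure; by ergodicity almost
every orbit enters that set, so the point is cut off by some `M (T^k ξ)`. Conversely a countable
dense subset of `M_as` lies almost surely in every `M (T^k ξ)`, and these sets are closed.

What remains is deterministic: for decreasing closed `E n`, the functions `g n + δ_{E n}`
epi-converge to `g + δ_{⋂ E n}`. Off `⋂ E n` every sequence converging to the point eventually
leaves `E n`, so the values are eventually `+∞`; on `⋂ E n` the constant sequence recovers `g`.
-/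

section Indicator

variable {X : Type*} {A : Set X} {x : X}

theorem add_delta_of_mem (hx : x ∈ A) (a : EReal) : a + delta A x = a := by
  simp [delta, hx]

theorem add_delta_of_notMem (hx : x ∉ A) {a : EReal} (ha : a ≠ ⊥) : a + delta A x = ⊤ := by
  simp [delta, hx, EReal.add_top_of_ne_bot ha]

theorem delta_nonneg (A : Set X) (x : X) : 0 ≤ delta A x := by
  unfold delta
  split_ifs <;> simp

end Indicator

theorem eventually_notMem_of_tendsto_of_notMem_iInter {X : Type*} [TopologicalSpace X]
    {E : ℕ → Set X} (hE : Antitone E) (hEc : ∀ n, IsClosed (E n)) {u : ℕ → X} {x : X}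
    (hu : Tendsto u atTop (𝓝 x)) (hx : x ∉ ⋂ n, E n) : ∀ᶠ n in atTop, u n ∉ E n := by
  obtain ⟨m, hm⟩ : ∃ m, x ∉ E m := by simpa using hx
  filter_upwards [hu ((hEc m).isOpen_compl.mem_nhds hm), eventually_ge_atTop m] with n hn hmn
  exact fun h => hn (hE hmn h)

theorem epiConv_add_delta_of_antitone {X : Type*} [MetricSpace X] {gn : ℕ → X → EReal}
    {g : X → EReal} (hcc : ContConv gn g) (hgn : ∀ n x, gn n x ≠ ⊥) (hg : ∀ x, g x ≠ ⊥)
    {E : ℕ → Set X} (hE : Antitone E) (hEc : ∀ n, IsClosed (E n)) :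
    EpiConv (fun n x => gn n x + delta (E n) x) (fun x => g x + delta (⋂ n, E n) x) := by
  intro x
  refine ⟨fun u hu => ?_, fun _ => x, tendsto_const_nhds, ?_⟩ <;> dsimp only
  · by_cases hx : x ∈ ⋂ n, E n
    · rw [add_delta_of_mem hx, ← (hcc x u hu).liminf_eq]
      exact liminf_le_liminf (.of_forall fun n => le_add_of_nonneg_right (delta_nonneg _ _))
    · have htop : ∀ᶠ n in atTop, gn n (u n) + delta (E n) (u n) = ⊤ :=
        (eventually_notMem_of_tendsto_of_notMem_iInter hE hEc hu hx).mono
          fun n hn => add_delta_of_notMem hn (hgn n _)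
      rw [liminf_congr htop, liminf_const]
      exact le_top
  · by_cases hx : x ∈ ⋂ n, E n
    · have hmem : ∀ n, gn n x + delta (E n) x = gn n x :=
        fun n => add_delta_of_mem (mem_iInter.1 hx n) _
      simp only [hmem, add_delta_of_mem hx]
      exact (hcc x _ tendsto_const_nhds).limsup_eq.le
    · rw [add_delta_of_notMem hx (hg x)]
      exact le_top

theorem Set.iInter_biInter_Icc_one {α : Type*} (S : ℕ → Set α) :
    ⋂ n, ⋂ k ∈ Finset.Icc 1 n, S k = ⋂ k, S (k + 1) := by
  ext x
  simp only [mem_iInter, Finset.mem_Icc]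
  refine ⟨fun h k => h (k + 1) (k + 1) ⟨k.succ_pos, le_rfl⟩, fun h n k hk => ?_⟩
  simpa [Nat.sub_add_cancel hk.1] using h (k - 1)

theorem Set.antitone_biInter_Icc_one {α : Type*} (S : ℕ → Set α) :
    Antitone fun n => ⋂ k ∈ Finset.Icc 1 n, S k :=
  fun _ _ hmn => iInter₂_mono' fun k hk => ⟨k, Finset.Icc_subset_Icc_right hmn hk, subset_rfl⟩

section EssentialIntersection

open TopologicalSpace

variable {Ξ X : Type*} [MeasurableSpace Ξ] [TopologicalSpace X]

/-- The set `M_as` of the paper. -/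
def essInter (μ : Measure Ξ) (M : Ξ → Set X) : Set X := {y | ∀ᵐ ζ ∂μ, y ∈ M ζ}

theorem Ergodic.ae_exists_iterate_succ_mem {μ : Measure Ξ} [IsFiniteMeasure μ] {T : Ξ → Ξ}
    (hT : Ergodic T μ) {A : Set Ξ} (hA : NullMeasurableSet A μ) (hA0 : μ A ≠ 0) :
    ∀ᵐ ξ ∂μ, ∃ k, T^[k + 1] ξ ∈ A := by
  set B := ⋃ k, T^[k + 1] ⁻¹' A
  have hBm : NullMeasurableSet B μ := .iUnion fun k =>
    hA.preimage (hT.toMeasurePreserving.iterate (k + 1)).quasiMeasurePreserving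
  have hBinv : T ⁻¹' B ⊆ B := by
    simp only [B, preimage_iUnion, iUnion_subset_iff]
    exact fun k => subset_iUnion_of_subset (k + 1) fun ξ hξ => by
      rwa [mem_preimage, Function.iterate_succ_apply]
  have hB0 : μ B ≠ 0 := by
    refine ne_bot_of_le_ne_bot hA0 ?_
    calc μ A = μ (T ⁻¹' A) := (hT.measure_preimage hA).symm
      _ ≤ μ B := measure_mono (subset_iUnion (fun k => T^[k + 1] ⁻¹' A) 0)
  rcases hT.ae_empty_or_univ_of_preimage_ae_le hBm hBinv.eventuallyLE with h | h
  · exact absurd (ae_eq_empty.1 h) hB0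
  · filter_upwards [mem_ae_iff.2 (ae_eq_univ.1 h)] with ξ hξ
    simpa [B] using hξ

theorem MeasureTheory.Measure.QuasiMeasurePreserving.ae_essInter_subset [PseudoMetrizableSpace X] [SeparableSpace X]
    {Ω : Type*} [MeasurableSpace Ω] {ν : Measure Ω} {μ : Measure Ξ} {f : Ω → Ξ}
    (hf : QuasiMeasurePreserving f ν μ) {M : Ξ → Set X} (hM : ∀ ξ, IsClosed (M ξ)) :
    ∀ᵐ ω ∂ν, essInter μ M ⊆ M (f ω) := by
  obtain ⟨D, hDM, hDc, hDd⟩ :=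
    (IsSeparable.of_separableSpace (essInter μ M)).exists_countable_dense_subset
  have hD : ∀ᵐ ω ∂ν, ∀ c ∈ D, c ∈ M (f ω) := (ae_ball_iff hDc).2 fun c hc => hf.ae (hDM hc)
  filter_upwards [hD] with ω hω
  exact hDd.trans (closure_minimal hω (hM _))

theorem Ergodic.ae_iInter_iterate_subset_essInter [SecondCountableTopology X]
    {μ : Measure Ξ} [IsFiniteMeasure μ] {T : Ξ → Ξ} (hT : Ergodic T μ) {M : Ξ → Set X}
    (hM : ∀ ξ, IsClosed (M ξ)) (hMm : MeasurableMultifun M) :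
    ∀ᵐ ξ ∂μ, ⋂ k, M (T^[k + 1] ξ) ⊆ essInter μ M := by
  let b := countableBasis X
  let miss (U : Set X) : Set Ξ := {ζ | Disjoint (M ζ) U}
  have hmiss (U : Set X) (hU : U ∈ b) : MeasurableSet (miss U) := by
    simpa only [miss, ← not_disjoint_iff_nonempty_inter, compl_ofPred, not_not] using
      (hMm U (isOpen_of_mem_countableBasis hU)).compl
  have hvisit : ∀ᵐ ξ ∂μ, ∀ U ∈ b, μ (miss U) ≠ 0 → ∃ k, T^[k + 1] ξ ∈ miss U :=
    (ae_ball_iff (countable_countableBasis X)).2 fun U hU => by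
      by_cases h : μ (miss U) = 0
      · exact ae_of_all _ fun ξ h' => absurd h h'
      · filter_upwards [hT.ae_exists_iterate_succ_mem (hmiss U hU).nullMeasurableSet h]
          with ξ hξ _ using hξ
  filter_upwards [hvisit] with ξ hξ x hx
  by_contra hxM
  have hcover : {ζ | x ∉ M ζ} ⊆ ⋃ U ∈ {U ∈ b | x ∈ U}, miss U := fun ζ hζ => by
    obtain ⟨U, hUb, hxU, hUM⟩ :=
      (isBasis_countableBasis X).exists_subset_of_mem_open hζ (hM ζ).isOpen_compl
    exact mem_biUnion ⟨hUb, hxU⟩ (subset_compl_iff_disjoint_left.1 hUM)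
  obtain ⟨U, ⟨hUb, hxU⟩, hU0⟩ : ∃ U ∈ {U ∈ b | x ∈ U}, μ (miss U) ≠ 0 := by
    by_contra! h
    exact hxM (ae_iff.2 (measure_mono_null hcover
      ((measure_biUnion_null_iff ((countable_countableBasis X).mono (sep_subset _ _))).2 h)))
  obtain ⟨k, hk⟩ := hξ U hUb hU0
  exact hk.ne_of_mem (mem_iInter.1 hx k) hxU rfl

theorem Ergodic.ae_iInter_iterate_eq_essInter [PseudoMetrizableSpace X]
    [SecondCountableTopology X] {μ : Measure Ξ} [IsFiniteMeasure μ] {T : Ξ → Ξ}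
    (hT : Ergodic T μ) {M : Ξ → Set X} (hM : ∀ ξ, IsClosed (M ξ))
    (hMm : MeasurableMultifun M) :
    ∀ᵐ ξ ∂μ, ⋂ k, M (T^[k + 1] ξ) = essInter μ M := by
  have hlower : ∀ᵐ ξ ∂μ, ∀ k, essInter μ M ⊆ M (T^[k + 1] ξ) := ae_all_iff.2 fun k =>
    (hT.toMeasurePreserving.iterate (k + 1)).quasiMeasurePreserving.ae_essInter_subset hM
  filter_upwards [hT.ae_iInter_iterate_subset_essInter hM hMm, hlower] with ξ hsub hsup
  exact hsub.antisymm (subset_iInter hsup)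

end EssentialIntersection

theorem ergodic_epiConv_general {X : Type*} [MetricSpace X] [PolishSpace X]
    {Ξ : Type*} [MeasurableSpace Ξ] (ℙ : Measure Ξ) [IsProbabilityMeasure ℙ]
    (T : Ξ → Ξ) (hT : Ergodic T ℙ)
    (M : Ξ → Set X) (hM_closed : ∀ ξ, IsClosed (M ξ)) (hM_meas : MeasurableMultifun M)
    (g : X → EReal) (gn : ℕ → X → EReal)
    (hg_noBot : ∀ x, g x ≠ ⊥) (hgn_noBot : ∀ n x, gn n x ≠ ⊥)
    (hcc : ContConv gn g) :
    ∀ᵐ ξ ∂ℙ,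
      EpiConv (fun n x => gn n x + delta (⋂ k ∈ Finset.Icc 1 n, M (T^[k] ξ)) x)
        (fun x => g x + delta {y : X | ∀ᵐ ζ ∂ℙ, y ∈ M ζ} x) := by
  filter_upwards [hT.ae_iInter_iterate_eq_essInter hM_closed hM_meas] with ξ hξ
  have hlim : ⋂ n, ⋂ k ∈ Finset.Icc 1 n, M (T^[k] ξ) = {y : X | ∀ᵐ ζ ∂ℙ, y ∈ M ζ} :=
    (Set.iInter_biInter_Icc_one _).trans hξ
  rw [← hlim]
  exact epiConv_add_delta_of_antitone hcc hgn_noBot hg_noBot (Set.antitone_biInter_Icc_one _)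
    fun n => isClosed_biInter fun k _ => hM_closed _

/-- with `g n` lsc converging continuously to the lsc function `g`
(values in ℝ ∪ {+∞}), for a.e. `ξ` the functions
`f n (ξ,·) = g n + δ_{E n ξ}` epi-converge to `f = g + δ_{M_as}`. -/
theorem ergodic_epiConv {X : Type*} [MetricSpace X] [PolishSpace X]
    {Ξ : Type*} [MeasurableSpace Ξ] (ℙ : Measure Ξ) [IsProbabilityMeasure ℙ] [ℙ.IsComplete]
    (T : Ξ → Ξ) (hT : Ergodic T ℙ)
    (M : Ξ → Set X) (hM_closed : ∀ ξ, IsClosed (M ξ)) (hM_meas : MeasurableMultifun M)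
    (g : X → EReal) (gn : ℕ → X → EReal)
    (hg_noBot : ∀ x, g x ≠ ⊥) (hgn_noBot : ∀ n x, gn n x ≠ ⊥)
    (hg_lsc : LowerSemicontinuous g) (hgn_lsc : ∀ n, LowerSemicontinuous (gn n))
    (hcc : ContConv gn g) :
    ∀ᵐ ξ ∂ℙ,
      EpiConv (fun n x => gn n x + delta (⋂ k ∈ Finset.Icc 1 n, M (T^[k] ξ)) x)
        (fun x => g x + delta {y : X | ∀ᵐ ζ ∂ℙ, y ∈ M ζ} x) :=
  ergodic_epiConv_general ℙ T hT M hM_closed hM_meas g gn hg_noBot hgn_noBot hcc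
end
end

section
/- Let X be a Polish space, (Ξ, 𝒜, ℙ) a complete probability space, T : Ξ → Ξ an ergodic measure-preserving transformation, M : Ξ ⇉ X a measurable set-valued map with closed values, g : X → ℝ ∪ {+∞} lower semicontinuous, and g_n : X → ℝ ∪ {+∞} a sequence of lower semicontinuous functions converging continuously to g. Set E_n(ξ) := ⋂_{k=1}^n M(T^k(ξ)) and M_as := {x ∈ X : x ∈ M(ξ) for ℙ-a.e. ξ}. Assume the robust problem min{g(x) : x ∈ M_as} is feasible (there exists x ∈ M_as with g(x) < +∞) and that, for ℙ-a.e. ξ, the sequence g_n is eventually level-compact on E_n(ξ). Then for ℙ-a.e. ξ ∈ Ξ, the optimal values converge: lim_n v(g_n, E_n(ξ)) = v(g, M_as). -/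
open Filter Topology MeasureTheory Set

noncomputable section

/-!
`M_as` has a countable dense subset whose points lie in every `M (T^[k] ξ)` almost surely,
so `M_as ⊆ E n ξ` by closedness, and this gives `limsup v(g n, E n ξ) ≤ v(g, M_as)`.
Conversely, a point `x ∉ M_as` misses `M ζ` on a set of positive measure, hence (using a
countable basis) some basic neighbourhood of `x` is disjoint from `M ζ` with positive
probability; by ergodicity almost every orbit visits that event, so `x` has a neighbourhood
disjoint from `E n ξ` for all large `n`. Level-compactness then extracts, from near-minimizers
below a level `α < v(g, M_as)`, a limit point which continuous convergence places in the
`α`-sublevel set of `g`, yet outside `M_as`, a contradiction.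
-/

section Dynamics

variable {Ξ : Type*} [MeasurableSpace Ξ] {μ : Measure Ξ} {T : Ξ → Ξ}

theorem MeasureTheory.MeasurePreserving.ae_forall_iterate (hT : MeasurePreserving T μ μ)
    {p : Ξ → Prop} (hp : ∀ᵐ ξ ∂μ, p ξ) : ∀ᵐ ξ ∂μ, ∀ k, p (T^[k] ξ) :=
  ae_all_iff.2 fun k => (hT.iterate k).quasiMeasurePreserving.ae hp

theorem Ergodic.ae_exists_iterate_mem [IsFiniteMeasure μ] (hT : Ergodic T μ) {A : Set Ξ}
    (hA : MeasurableSet A) (hA0 : μ A ≠ 0) : ∀ᵐ ξ ∂μ, ∃ k ≥ 1, T^[k] ξ ∈ A := by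
  set C := ⋃ k, T^[k + 1] ⁻¹' A
  have hC : MeasurableSet C := .iUnion fun k => hT.measurable.iterate (k + 1) hA
  have hTC : T ⁻¹' C ⊆ C := by
    simp only [C, preimage_iUnion, ← preimage_comp, ← Function.iterate_succ]
    exact iUnion_subset fun k => subset_iUnion (fun k => T^[k + 1] ⁻¹' A) (k + 1)
  have hC0 : μ C ≠ 0 := by
    refine fun h => hA0 ?_
    rw [← (hT.iterate 1).measure_preimage hA.nullMeasurableSet]
    exact measure_mono_null (subset_iUnion (fun k => T^[k + 1] ⁻¹' A) 0) h
  rcases hT.ae_empty_or_univ_of_preimage_ae_le hC.nullMeasurableSet hTC.eventuallyLE with h | h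
  · exact absurd (ae_eq_empty.1 h) hC0
  · filter_upwards [h.mem_iff] with ξ hξ
    obtain ⟨k, hk⟩ := mem_iUnion.1 (hξ.2 trivial)
    exact ⟨k + 1, le_add_self, hk⟩

end Dynamics

section RandomSets

variable {Ξ X : Type*} [MeasurableSpace Ξ] [TopologicalSpace X] {μ : Measure Ξ} {T : Ξ → Ξ}
  {M : Ξ → Set X}

theorem MeasurableMultifun.measurableSet_disjoint (hM : MeasurableMultifun M) {U : Set X}
    (hU : IsOpen U) : MeasurableSet {ζ | Disjoint (M ζ) U} := by
  simpa only [← not_disjoint_iff_nonempty_inter, compl_ofPred, not_not] using (hM U hU).compl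

open TopologicalSpace

variable [SecondCountableTopology X]

theorem MeasureTheory.MeasurePreserving.ae_setOf_ae_mem_subset_iterate
    (hT : MeasurePreserving T μ μ) (hM : ∀ ζ, IsClosed (M ζ)) :
    ∀ᵐ ξ ∂μ, ∀ k, {x | ∀ᵐ ζ ∂μ, x ∈ M ζ} ⊆ M (T^[k] ξ) := by
  obtain ⟨c, hc, hcd⟩ := exists_countable_dense {x | ∀ᵐ ζ ∂μ, x ∈ M ζ}
  have hcM : ∀ᵐ ξ ∂μ, ∀ x ∈ Subtype.val '' c, ∀ k, x ∈ M (T^[k] ξ) := by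
    refine (ae_ball_iff (hc.image _)).2 ?_
    rintro _ ⟨x, -, rfl⟩
    exact hT.ae_forall_iterate x.2
  filter_upwards [hcM] with ξ hξ k
  exact (Subtype.dense_iff.1 hcd).trans (closure_minimal (fun x hx => hξ x hx k) (hM _))

theorem exists_mem_countableBasis_measure_disjoint_ne_zero (hM : ∀ ζ, IsClosed (M ζ)) {x : X}
    (hx : x ∉ {x | ∀ᵐ ζ ∂μ, x ∈ M ζ}) :
    ∃ B ∈ countableBasis X, x ∈ B ∧ μ {ζ | Disjoint (M ζ) B} ≠ 0 := by
  by_contra! h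
  have hmeets : ∀ᵐ ζ ∂μ, ∀ B ∈ {B ∈ countableBasis X | x ∈ B}, ¬Disjoint (M ζ) B :=
    (ae_ball_iff ((countable_countableBasis X).mono (sep_subset _ _))).2 fun B hB =>
      measure_eq_zero_iff_ae_notMem.1 (h B hB.1 hB.2)
  refine hx (hmeets.mono fun ζ hζ => of_not_not fun hxM => ?_)
  obtain ⟨B, hB, hxB, hBM⟩ :=
    (isBasis_countableBasis X).mem_nhds_iff.1 ((hM ζ).isOpen_compl.mem_nhds hxM)
  exact hζ B ⟨hB, hxB⟩ (disjoint_compl_right.mono_right hBM)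

theorem Ergodic.ae_forall_notMem_exists_disjoint_iterate [IsFiniteMeasure μ]
    (hT : Ergodic T μ) (hM : ∀ ζ, IsClosed (M ζ)) (hMm : MeasurableMultifun M) :
    ∀ᵐ ξ ∂μ, ∀ x ∉ {x | ∀ᵐ ζ ∂μ, x ∈ M ζ}, ∃ U ∈ 𝓝 x, ∃ k ≥ 1, Disjoint (M (T^[k] ξ)) U := by
  have hvisit : ∀ᵐ ξ ∂μ, ∀ B ∈ countableBasis X,
      μ {ζ | Disjoint (M ζ) B} ≠ 0 → ∃ k ≥ 1, Disjoint (M (T^[k] ξ)) B := by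
    refine (ae_ball_iff (countable_countableBasis X)).2 fun B hB => ?_
    by_cases h0 : μ {ζ | Disjoint (M ζ) B} = 0
    · exact .of_forall fun _ h => absurd h0 h
    · filter_upwards [hT.ae_exists_iterate_mem
        (hMm.measurableSet_disjoint (isOpen_of_mem_countableBasis hB)) h0] with ξ hξ using
        fun _ => hξ
  filter_upwards [hvisit] with ξ hξ x hx
  obtain ⟨B, hB, hxB, h0⟩ := exists_mem_countableBasis_measure_disjoint_ne_zero hM hx
  exact ⟨B, (isOpen_of_mem_countableBasis hB).mem_nhds hxB, hξ B hB h0⟩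

end RandomSets

section Values

variable {X : Type*} {gn : ℕ → X → EReal} {g : X → EReal}

theorem limsup_vOn_le_of_subset {E : ℕ → Set X} {S : Set X}
    (hg : ∀ x, Tendsto (fun n => gn n x) atTop (𝓝 (g x))) (hSE : ∀ n, S ⊆ E n) :
    limsup (fun n => vOn (gn n) (E n)) atTop ≤ vOn g S :=
  le_iInf₂ fun x hx =>
    (hg x).limsup_eq ▸ limsup_le_limsup (.of_forall fun n => iInf₂_le x (hSE n hx))

variable [MetricSpace X]

theorem ContConv.tendsto_comp_strictMono (hcc : ContConv gn g) {σ : ℕ → ℕ} (hσ : StrictMono σ)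
    {w : ℕ → X} {x : X} (hw : Tendsto w atTop (𝓝 x)) :
    Tendsto (fun i => gn (σ i) (w i)) atTop (𝓝 (g x)) := by
  set u := Function.extend σ w fun _ => x
  have hu : Tendsto u atTop (𝓝 x) := fun U hU => by
    obtain ⟨I, hI⟩ := eventually_atTop.1 (hw hU)
    refine eventually_atTop.2 ⟨σ I, fun n hn => ?_⟩
    by_cases hn' : ∃ i, σ i = n
    · obtain ⟨i, rfl⟩ := hn'
      simpa only [u, hσ.injective.extend_apply] using hI i (hσ.le_iff_le.1 hn)
    · simpa only [u, Function.extend_apply' _ _ _ hn'] using mem_of_mem_nhds hU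
  simpa only [Function.comp_def, u, hσ.injective.extend_apply] using
    (hcc x u hu).comp hσ.tendsto_atTop

theorem le_liminf_vOn_of_eventually_disjoint {E : ℕ → Set X} {S : Set X}
    (hcc : ContConv gn g) (hlc : EvLevelCompact gn E)
    (hS : ∀ x ∉ S, ∃ U ∈ 𝓝 x, ∀ᶠ n in atTop, Disjoint (E n) U) :
    vOn g S ≤ liminf (fun n => vOn (gn n) (E n)) atTop := by
  by_contra! hlt
  obtain ⟨α, hα, hαS⟩ := EReal.exists_between_coe_real hlt
  obtain ⟨N, hK⟩ := hlc α
  obtain ⟨φ, hφ, hφα⟩ := extraction_of_frequently_atTop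
    ((frequently_lt_of_liminf_lt (by isBoundedDefault) hα).and_eventually (eventually_ge_atTop N))
  have hz : ∀ j, ∃ z ∈ E (φ j), gn (φ j) z < α := fun j => by
    simpa only [vOn, iInf_lt_iff, exists_prop] using (hφα j).1
  choose z hzE hzα using hz
  obtain ⟨x, -, ψ, hψ, hzx⟩ := hK.tendsto_subseq fun j =>
    subset_closure (mem_biUnion (hφα j).2 ⟨hzE j, (hzα j).le⟩)
  have hgx : g x ≤ α := le_of_tendsto (hcc.tendsto_comp_strictMono (hφ.comp hψ) hzx)
    (.of_forall fun i => (hzα (ψ i)).le)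
  have hxS : x ∉ S := fun hx => (hαS.trans_le ((iInf₂_le x hx).trans hgx)).false
  obtain ⟨U, hU, hEU⟩ := hS x hxS
  obtain ⟨i, hEUi, hzU⟩ := (((hφ.comp hψ).tendsto_atTop.eventually hEU).and (hzx hU)).exists
  exact disjoint_left.1 hEUi (hzE (ψ i)) hzU

end Values

theorem ergodic_value_convergence_general {X : Type*} [MetricSpace X] [PolishSpace X]
    {Ξ : Type*} [MeasurableSpace Ξ] (ℙ : Measure Ξ) [IsProbabilityMeasure ℙ]
    (T : Ξ → Ξ) (hT : Ergodic T ℙ)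
    (M : Ξ → Set X) (hM_closed : ∀ ξ, IsClosed (M ξ)) (hM_meas : MeasurableMultifun M)
    (g : X → EReal) (gn : ℕ → X → EReal)
    (hcc : ContConv gn g)
    (hlc : ∀ᵐ ξ ∂ℙ, EvLevelCompact gn (fun n => ⋂ k ∈ Finset.Icc 1 n, M (T^[k] ξ))) :
    ∀ᵐ ξ ∂ℙ,
      Tendsto (fun n => vOn (gn n) (⋂ k ∈ Finset.Icc 1 n, M (T^[k] ξ))) atTop
        (𝓝 (vOn g {y : X | ∀ᵐ ζ ∂ℙ, y ∈ M ζ})) := by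
  filter_upwards [hT.toMeasurePreserving.ae_setOf_ae_mem_subset_iterate hM_closed,
    hT.ae_forall_notMem_exists_disjoint_iterate hM_closed hM_meas, hlc] with ξ hsub hhit hlcξ
  have hleave : ∀ x ∉ {y : X | ∀ᵐ ζ ∂ℙ, y ∈ M ζ}, ∃ U ∈ 𝓝 x,
      ∀ᶠ n in atTop, Disjoint (⋂ k ∈ Finset.Icc 1 n, M (T^[k] ξ)) U := fun x hx => by
    obtain ⟨U, hU, k, hk, hkU⟩ := hhit x hx
    exact ⟨U, hU, (eventually_ge_atTop k).mono fun n hn =>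
      hkU.mono_left (biInter_subset_of_mem (Finset.mem_Icc.2 ⟨hk, hn⟩))⟩
  exact tendsto_of_le_liminf_of_limsup_le (le_liminf_vOn_of_eventually_disjoint hcc hlcξ hleave)
    (limsup_vOn_le_of_subset (fun x => hcc x _ tendsto_const_nhds)
      fun n => subset_iInter₂ fun k _ => hsub k)

/-- if the robust problem is feasible and `g n` is eventually level-compact
on `E n ξ` for a.e. `ξ`, then the optimal values converge:
`v(g n, E n ξ) → v(g, M_as)` for a.e. `ξ`. -/
theorem ergodic_value_convergence {X : Type*} [MetricSpace X] [PolishSpace X]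
    {Ξ : Type*} [MeasurableSpace Ξ] (ℙ : Measure Ξ) [IsProbabilityMeasure ℙ] [ℙ.IsComplete]
    (T : Ξ → Ξ) (hT : Ergodic T ℙ)
    (M : Ξ → Set X) (hM_closed : ∀ ξ, IsClosed (M ξ)) (hM_meas : MeasurableMultifun M)
    (g : X → EReal) (gn : ℕ → X → EReal)
    (hg_noBot : ∀ x, g x ≠ ⊥) (hgn_noBot : ∀ n x, gn n x ≠ ⊥)
    (hg_lsc : LowerSemicontinuous g) (hgn_lsc : ∀ n, LowerSemicontinuous (gn n))
    (hcc : ContConv gn g)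
    (hfeas : ∃ x ∈ {y : X | ∀ᵐ ζ ∂ℙ, y ∈ M ζ}, g x < ⊤)
    (hlc : ∀ᵐ ξ ∂ℙ, EvLevelCompact gn (fun n => ⋂ k ∈ Finset.Icc 1 n, M (T^[k] ξ))) :
    ∀ᵐ ξ ∂ℙ,
      Tendsto (fun n => vOn (gn n) (⋂ k ∈ Finset.Icc 1 n, M (T^[k] ξ))) atTop
        (𝓝 (vOn g {y : X | ∀ᵐ ζ ∂ℙ, y ∈ M ζ})) :=
  ergodic_value_convergence_general ℙ T hT M hM_closed hM_meas g gn hcc hlc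
end
end

section
/- Let X be a Polish space, (Ξ, 𝒜, ℙ) a complete probability space with countable product (Ξ^∞, 𝒜^∞, ℙ^∞), M : Ξ ⇉ X a measurable set-valued map with closed values, g : X → ℝ ∪ {+∞} lower semicontinuous, and g_n : X → ℝ ∪ {+∞} a sequence of lower semicontinuous functions converging continuously to g. For ω = (ξ_k)_{k≥1} set S_n(ω) := ⋂_{k=1}^n M(ξ_k) and M_as := {x ∈ X : x ∈ M(ξ) for ℙ-a.e. ξ}. Assume the robust problem min{g(x) : x ∈ M_as} is feasible (there exists x ∈ M_as with g(x) < +∞) and that, for ℙ^∞-a.e. ω, the sequence g_n is eventually level-compact on S_n(ω). Then for any measurable functions ε_n : Ξ^∞ → (0, +∞) with ε_n(ω) → 0 for ℙ^∞-a.e. ω, one has, for ℙ^∞-a.e. ω ∈ Ξ^∞: ∅ ≠ limsup_n (ε_n(ω)-argmin_{S_n(ω)} g_n) ⊆ argmin_{M_as} g, where limsup_n denotes the Painlevé–Kuratowski outer limit of sets. -/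
open Filter Topology MeasureTheory Set

noncomputable section

/-!
Almost surely the finite intersections `S n ω = ⋂_{k<n} M (ω k)` decrease to `M_as`: a countable
dense subset of `M_as` lies in every `M (ω k)`, and for each set `U` of a countable basis with
`ℙ {ξ | M ξ ∩ U = ∅} > 0` some `M (ω k)` misses `U`. For such an `ω` the statement is
deterministic. Bounding the `ε n`-infimal value of `gn n` on `S n` by its value at a fixed point
of `M_as` and using continuous convergence gives `limsup_n v_{ε n}(gn n, S n) ≤ inf_{M_as} g < ⊤`,
so the `ε n`-argmins eventually lie in one sublevel set, and level-compactness provides a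
cluster point. Conversely, along a convergent sequence of `ε n`-argmin points continuous
convergence gives `g x ≤ inf_{M_as} g`, and `x ∈ ⋂ n, S n = M_as` because the `S n` are closed
and decreasing.
-/

section OuterLimit

variable {X : Type*} [MetricSpace X]

lemma ContConv.tendsto_comp_strictMono_s13 {f : ℕ → X → EReal} {g : X → EReal} (h : ContConv f g)
    {φ : ℕ → ℕ} (hφ : StrictMono φ) {x : X} {y : ℕ → X} (hy : Tendsto y atTop (𝓝 x)) :
    Tendsto (fun j => f (φ j) (y j)) atTop (𝓝 (g x)) := by
  classical
  -- `ψ` is a left inverse of `φ` tending to infinity; `y ∘ ψ` is a full sequence tending to `x`.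
  let ψ : ℕ → ℕ := fun n => Nat.findGreatest (fun j => φ j ≤ n) n
  have hψφ : ∀ j, ψ (φ j) = j := fun j =>
    le_antisymm (hφ.le_iff_le.1 (Nat.findGreatest_spec (P := fun i => φ i ≤ φ j)
      hφ.le_apply le_rfl)) (Nat.le_findGreatest hφ.le_apply le_rfl)
  have hψ : Tendsto ψ atTop atTop := tendsto_atTop_atTop.2 fun b =>
    ⟨φ b, fun n hn => (hψφ b).ge.trans (Nat.findGreatest_mono (fun _ hj => hj.trans hn) hn)⟩
  simpa only [Function.comp_def, hψφ] using (h x _ (hy.comp hψ)).comp hφ.tendsto_atTop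

lemma mem_outerLim_iff {S : ℕ → Set X} {x : X} :
    x ∈ outerLim S ↔ ∃ φ : ℕ → ℕ, StrictMono φ ∧
      ∃ y : ℕ → X, (∀ j, y j ∈ S (φ j)) ∧ Tendsto y atTop (𝓝 x) := by
  constructor
  · intro hx
    have hfreq : ∀ j : ℕ, ∃ᶠ n in atTop, Metric.infEDist x (S n) < (j : ENNReal)⁻¹ :=
      fun j => frequently_lt_of_liminf_lt (by isBoundedDefault) <|
        (show atTop.liminf (fun n => Metric.infEDist x (S n)) = 0 from hx) ▸
          ENNReal.inv_pos.2 (ENNReal.natCast_ne_top j)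
    obtain ⟨φ, hφ, hlt⟩ := extraction_forall_of_frequently hfreq
    choose y hyS hyx using fun j => Metric.infEDist_lt_iff.1 (hlt j)
    refine ⟨φ, hφ, y, hyS, tendsto_iff_edist_tendsto_0.2 ?_⟩
    refine tendsto_of_tendsto_of_tendsto_of_le_of_le tendsto_const_nhds
      ENNReal.tendsto_inv_nat_nhds_zero (fun _ => zero_le) fun j => ?_
    rw [edist_comm]
    exact (hyx j).le
  · rintro ⟨φ, hφ, y, hyS, hyx⟩
    have hdist : Tendsto (fun j => Metric.infEDist x (S (φ j))) atTop (𝓝 0) :=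
      tendsto_of_tendsto_of_tendsto_of_le_of_le tendsto_const_nhds
        (by simpa using (tendsto_const_nhds (x := x)).edist hyx) (fun _ => zero_le)
        fun j => Metric.infEDist_le_edist_of_mem (hyS j)
    exact le_antisymm ((hφ.tendsto_atTop.liminf_le_liminf_comp).trans_eq hdist.liminf_eq)
      zero_le

lemma outerLim_nonempty_of_isCompact {S : ℕ → Set X} {K : Set X} (hS : ∀ n, (S n).Nonempty)
    (hK : IsCompact K) (hSK : ∀ᶠ n in atTop, S n ⊆ K) : (outerLim S).Nonempty := by
  choose x hx using hS
  obtain ⟨N, hN⟩ := eventually_atTop.1 hSK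
  obtain ⟨z, -, φ, hφ, hlim⟩ :=
    hK.tendsto_subseq fun j => hN (j + N) (Nat.le_add_left N j) (hx (j + N))
  exact ⟨z, mem_outerLim_iff.2 ⟨fun j => φ j + N, fun a b hab => Nat.add_lt_add_right (hφ hab) N,
    _, fun j => hx _, hlim⟩⟩

end OuterLimit

section EpsArgmin

variable {X : Type*} {h : X → EReal} {C : Set X} {ε : ℝ}

lemma vEpsOn_zero (h : X → EReal) (C : Set X) : vEpsOn h C 0 = vOn h C := by
  unfold vEpsOn
  split_ifs <;> simp_all

lemma vOn_lt_vEpsOn (hε : 0 < ε) (htop : vOn h C ≠ ⊤) : vOn h C < vEpsOn h C ε := by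
  unfold vEpsOn
  split_ifs with hb hε0
  · exact absurd hε0 hε.ne'
  · rw [hb]
    exact EReal.bot_lt_coe _
  · rw [← EReal.coe_toReal htop hb, ← EReal.coe_add]
    exact_mod_cast lt_add_of_pos_right _ hε

lemma argminOn_nonempty (hε : 0 < ε) (hC : C.Nonempty) : (argminOn h C ε).Nonempty := by
  by_cases htop : vOn h C = ⊤
  · obtain ⟨x, hx⟩ := hC
    refine ⟨x, hx, ?_⟩
    simp [vEpsOn, htop]
  · obtain ⟨x, hxC, hx⟩ := lt_biInf_iff.1 (vOn_lt_vEpsOn hε htop)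
    exact ⟨x, hxC, hx.le⟩

lemma vEpsOn_le_max_add (hε : 0 < ε) {x : X} (hx : x ∈ C) :
    vEpsOn h C ε ≤ max (h x) ((-ε⁻¹ : ℝ) : EReal) + ε := by
  unfold vEpsOn
  split_ifs with hb hε0
  · exact absurd hε0 hε.ne'
  · exact (le_add_of_nonneg_right (EReal.coe_nonneg.2 hε.le)).trans
      (add_le_add_left (le_max_right _ _) _)
  · exact add_le_add_left ((biInf_le h hx).trans (le_max_left _ _)) _

end EpsArgmin

section ArgminConvergence

variable {X : Type*} [MetricSpace X] {S : ℕ → Set X} {A : Set X} {f : ℕ → X → EReal}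
  {g : X → EReal} {ε : ℕ → ℝ}

lemma limsup_vEpsOn_le_vOn (hAS : ∀ n, A ⊆ S n) (hfg : ContConv f g) (hε : ∀ n, 0 < ε n)
    (hε0 : Tendsto ε atTop (𝓝 0)) :
    limsup (fun n => vEpsOn (f n) (S n) (ε n)) atTop ≤ vOn g A := by
  refine le_iInf₂ fun x hx => ?_
  have hinv : Tendsto (fun n => ((-(ε n)⁻¹ : ℝ) : EReal)) atTop (𝓝 ⊥) :=
    EReal.tendsto_coe_nhds_bot_iff.2 <| tendsto_neg_atTop_atBot.comp <|
      tendsto_inv_nhdsGT_zero.comp <| tendsto_nhdsWithin_iff.2 ⟨hε0, .of_forall hε⟩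
  have hmax : Tendsto (fun n => max (f n x) ((-(ε n)⁻¹ : ℝ) : EReal)) atTop (𝓝 (g x)) := by
    simpa using (hfg x _ tendsto_const_nhds).max hinv
  have hbound : Tendsto (fun n => max (f n x) ((-(ε n)⁻¹ : ℝ) : EReal) + ε n) atTop
      (𝓝 (g x)) := by
    have hadd := EReal.continuousAt_add (p := (g x, 0)) (.inr EReal.zero_ne_bot)
      (.inr EReal.zero_ne_top)
    simpa [Function.comp_def] using hadd.tendsto.comp (hmax.prodMk_nhds
      ((continuous_coe_real_ereal.tendsto 0).comp hε0))
  calc limsup (fun n => vEpsOn (f n) (S n) (ε n)) atTop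
      ≤ limsup (fun n => max (f n x) ((-(ε n)⁻¹ : ℝ) : EReal) + ε n) atTop :=
        limsup_le_limsup (.of_forall fun n => vEpsOn_le_max_add (hε n) (hAS n hx))
    _ = g x := hbound.limsup_eq

theorem outerLim_argminOn_nonempty (hAS : ∀ n, A ⊆ S n) (hfg : ContConv f g)
    (hfeas : ∃ x ∈ A, g x < ⊤) (hlc : EvLevelCompact f S) (hε : ∀ n, 0 < ε n)
    (hε0 : Tendsto ε atTop (𝓝 0)) :
    (outerLim fun n => argminOn (f n) (S n) (ε n)).Nonempty := by
  obtain ⟨x₀, hx₀A, hx₀⟩ := hfeas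
  have hlimsup : limsup (fun n => vEpsOn (f n) (S n) (ε n)) atTop < ⊤ :=
    (limsup_vEpsOn_le_vOn hAS hfg hε hε0).trans_lt ((biInf_le g hx₀A).trans_lt hx₀)
  obtain ⟨α, hα, -⟩ := EReal.exists_between_coe_real hlimsup
  obtain ⟨N, hN⟩ := hlc α
  refine outerLim_nonempty_of_isCompact (fun n => argminOn_nonempty (hε n) ⟨x₀, hAS n hx₀A⟩)
    hN ?_
  filter_upwards [eventually_lt_of_limsup_lt hα, eventually_ge_atTop N] with n hn hnN x hx
  exact subset_closure (mem_biUnion hnN ⟨hx.1, hx.2.trans hn.le⟩)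

theorem outerLim_argminOn_subset (hS_closed : ∀ n, IsClosed (S n)) (hS_anti : Antitone S)
    (hAS : ∀ n, A ⊆ S n) (hSA : ⋂ n, S n ⊆ A) (hfg : ContConv f g) (hε : ∀ n, 0 < ε n)
    (hε0 : Tendsto ε atTop (𝓝 0)) :
    outerLim (fun n => argminOn (f n) (S n) (ε n)) ⊆ argminOn g A 0 := by
  intro x hx
  obtain ⟨φ, hφ, y, hy, hyx⟩ := mem_outerLim_iff.1 hx
  have hxS : x ∈ ⋂ n, S n := mem_iInter.2 fun n => (hS_closed n).mem_of_tendsto hyx <|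
    (eventually_ge_atTop n).mono fun j hj => hS_anti (hj.trans hφ.le_apply) (hy j).1
  let v : ℕ → EReal := fun n => vEpsOn (f n) (S n) (ε n)
  have hgx : g x ≤ vOn g A := calc
    g x = liminf (fun j => f (φ j) (y j)) atTop :=
        (hfg.tendsto_comp_strictMono_s13 hφ hyx).liminf_eq.symm
    _ ≤ liminf (v ∘ φ) atTop := liminf_le_liminf (.of_forall fun j => (hy j).2)
    _ ≤ limsup (v ∘ φ) atTop := liminf_le_limsup
    _ ≤ limsup v atTop := hφ.tendsto_atTop.limsup_comp_le_limsup
    _ ≤ vOn g A := limsup_vEpsOn_le_vOn hAS hfg hε hε0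
  exact ⟨hSA hxS, by rwa [vEpsOn_zero]⟩

end ArgminConvergence

section Scenario

variable {Ξ : Type*} [MeasurableSpace Ξ] {ℙ : Measure Ξ} {P : Measure (ℕ → Ξ)}

lemma IsProductMeasure.ae_forall_mem (hP : IsProductMeasure P ℙ) {B : Set Ξ}
    (hB : MeasurableSet B) (h : ∀ᵐ ξ ∂ℙ, ξ ∈ B) : ∀ᵐ ω ∂P, ∀ k, ω k ∈ B := by
  refine ae_all_iff.2 fun k => ae_iff.2 ?_
  have hk := hP {k} (fun _ => Bᶜ) fun _ => hB.compl
  simp only [Finset.mem_singleton, forall_eq, mem_compl_iff, Finset.prod_singleton] at hk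
  rw [hk, ← ae_iff.1 h]
  rfl

lemma IsProductMeasure.ae_exists_mem [IsProbabilityMeasure ℙ] (hP : IsProductMeasure P ℙ)
    {C : Set Ξ} (hC : MeasurableSet C) (hpos : 0 < ℙ C) : ∀ᵐ ω ∂P, ∃ k, ω k ∈ C := by
  have hlt : ℙ Cᶜ < 1 := by
    rw [prob_compl_eq_one_sub hC]
    exact ENNReal.sub_lt_self ENNReal.one_ne_top one_ne_zero hpos.ne'
  have hle : ∀ n, P {ω | ¬ ∃ k, ω k ∈ C} ≤ ℙ Cᶜ ^ n := fun n => calc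
    P {ω | ¬ ∃ k, ω k ∈ C} ≤ P {ω | ∀ i ∈ Finset.range n, ω i ∈ Cᶜ} :=
        measure_mono fun ω hω i _ hi => hω ⟨i, hi⟩
    _ = ℙ Cᶜ ^ n := by
        rw [hP (Finset.range n) (fun _ => Cᶜ) fun _ => hC.compl, Finset.prod_const,
          Finset.card_range]
  exact ae_iff.2 <| le_antisymm
    (ge_of_tendsto' (ENNReal.tendsto_pow_atTop_nhds_zero_of_lt_one hlt) hle) zero_le

variable {X : Type*} [MetricSpace X] {M : Ξ → Set X}

lemma MeasurableMultifun.measurableSet_setOf_mem (hM : MeasurableMultifun M)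
    (hM_closed : ∀ ξ, IsClosed (M ξ)) (x : X) : MeasurableSet {ξ | x ∈ M ξ} := by
  have hEq : {ξ | x ∈ M ξ} = ⋂ m : ℕ, {ξ | (M ξ ∩ Metric.ball x (1 / (m + 1))).Nonempty} := by
    ext ξ
    simp only [mem_ofPred_eq, mem_iInter]
    refine ⟨fun hx m => ⟨x, hx, Metric.mem_ball_self Nat.one_div_pos_of_nat⟩, fun h => ?_⟩
    rw [← (hM_closed ξ).closure_eq, Metric.mem_closure_iff]
    intro δ hδ
    obtain ⟨m, hm⟩ := exists_nat_one_div_lt hδ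
    obtain ⟨y, hyM, hyx⟩ := h m
    exact ⟨y, hyM, (Metric.mem_ball'.1 hyx).trans hm⟩
  rw [hEq]
  exact .iInter fun m => hM _ Metric.isOpen_ball

lemma ae_forall_setOf_ae_mem_subset [TopologicalSpace.SeparableSpace X]
    (hP : IsProductMeasure P ℙ) (hM_closed : ∀ ξ, IsClosed (M ξ)) (hM : MeasurableMultifun M) :
    ∀ᵐ ω ∂P, ∀ k, {x | ∀ᵐ ξ ∂ℙ, x ∈ M ξ} ⊆ M (ω k) := by
  obtain ⟨D, hD_sub, hD_count, hD_dense⟩ := TopologicalSpace.IsSeparable.exists_countable_dense_subset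
    (.of_separableSpace {x | ∀ᵐ ξ ∂ℙ, x ∈ M ξ})
  have hD : ∀ᵐ ω ∂P, ∀ d ∈ D, ∀ k, d ∈ M (ω k) := (ae_ball_iff hD_count).2 fun d hd =>
    hP.ae_forall_mem (hM.measurableSet_setOf_mem hM_closed d) (hD_sub hd)
  filter_upwards [hD] with ω hω k x hx
  exact (hM_closed (ω k)).closure_subset_iff.2 (fun d hd => hω d hd k) (hD_dense hx)

lemma ae_iInter_subset_setOf_ae_mem [SecondCountableTopology X] [IsProbabilityMeasure ℙ]
    (hP : IsProductMeasure P ℙ) (hM_closed : ∀ ξ, IsClosed (M ξ)) (hM : MeasurableMultifun M) :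
    ∀ᵐ ω ∂P, ⋂ k, M (ω k) ⊆ {x | ∀ᵐ ξ ∂ℙ, x ∈ M ξ} := by
  obtain ⟨b, hb_count, -, hb⟩ := TopologicalSpace.exists_countable_basis X
  have hmiss : ∀ᵐ ω ∂P, ∀ U ∈ b, 0 < ℙ {ξ | ¬ (M ξ ∩ U).Nonempty} →
      ∃ k, ¬ (M (ω k) ∩ U).Nonempty := (ae_ball_iff hb_count).2 fun U hU => by
    by_cases hpos : 0 < ℙ {ξ | ¬ (M ξ ∩ U).Nonempty}
    · filter_upwards [hP.ae_exists_mem (hM U (hb.isOpen hU)).compl hpos] with ω hω using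
        fun _ => hω
    · exact .of_forall fun _ h => absurd h hpos
  filter_upwards [hmiss] with ω hω x hx
  -- `x ∉ M ξ` is witnessed by a basic neighbourhood of `x` missed by the closed set `M ξ`.
  have hcover : {ξ | x ∉ M ξ} ⊆ ⋃ U ∈ {U ∈ b | x ∈ U}, {ξ | ¬ (M ξ ∩ U).Nonempty} := by
    intro ξ hξ
    obtain ⟨U, hUb, hxU, hUM⟩ := hb.exists_subset_of_mem_open hξ (hM_closed ξ).isOpen_compl
    exact mem_biUnion ⟨hUb, hxU⟩ fun ⟨z, hzM, hzU⟩ => hUM hzU hzM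
  refine ae_iff.2 <| measure_mono_null hcover <|
    (measure_biUnion_null_iff (hb_count.mono (sep_subset _ _))).2 fun U ⟨hUb, hxU⟩ => ?_
  by_contra hne
  obtain ⟨k, hk⟩ := hω U hUb (pos_iff_ne_zero.2 hne)
  exact hk ⟨x, mem_iInter.1 hx k, hxU⟩

end Scenario

theorem scenario_argmin_convergence_general {X : Type*} [MetricSpace X] [PolishSpace X]
    {Ξ : Type*} [MeasurableSpace Ξ] (ℙ : Measure Ξ) [IsProbabilityMeasure ℙ]
    (P : Measure (ℕ → Ξ)) (hP : IsProductMeasure P ℙ)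
    (M : Ξ → Set X) (hM_closed : ∀ ξ, IsClosed (M ξ)) (hM_meas : MeasurableMultifun M)
    (g : X → EReal) (gn : ℕ → X → EReal)
    (hcc : ContConv gn g)
    (hfeas : ∃ x ∈ {y : X | ∀ᵐ ζ ∂ℙ, y ∈ M ζ}, g x < ⊤)
    (hlc : ∀ᵐ ω ∂P, EvLevelCompact gn (fun n => ⋂ k ∈ Finset.range n, M (ω k)))
    (εn : ℕ → (ℕ → Ξ) → ℝ)
    (hεn_pos : ∀ n ω, 0 < εn n ω)
    (hεn_to0 : ∀ᵐ ω ∂P, Tendsto (fun n => εn n ω) atTop (𝓝 0)) :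
    ∀ᵐ ω ∂P,
      (outerLim (fun n =>
          argminOn (gn n) (⋂ k ∈ Finset.range n, M (ω k)) (εn n ω))).Nonempty ∧
      outerLim (fun n =>
          argminOn (gn n) (⋂ k ∈ Finset.range n, M (ω k)) (εn n ω)) ⊆
        argminOn g {y : X | ∀ᵐ ζ ∂ℙ, y ∈ M ζ} 0 := by
  filter_upwards [ae_forall_setOf_ae_mem_subset hP hM_closed hM_meas,
    ae_iInter_subset_setOf_ae_mem hP hM_closed hM_meas, hlc, hεn_to0] with ω hsub hsup hlcω hεω
  have hAS : ∀ n, {y : X | ∀ᵐ ζ ∂ℙ, y ∈ M ζ} ⊆ ⋂ k ∈ Finset.range n, M (ω k) :=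
    fun n x hx => mem_iInter₂.2 fun k _ => hsub k hx
  have hSA : ⋂ n, ⋂ k ∈ Finset.range n, M (ω k) ⊆ {y : X | ∀ᵐ ζ ∂ℙ, y ∈ M ζ} :=
    fun x hx => hsup <| mem_iInter.2 fun k =>
      mem_iInter₂.1 (mem_iInter.1 hx (k + 1)) k (Finset.self_mem_range_succ k)
  have hS_anti : Antitone fun n => ⋂ k ∈ Finset.range n, M (ω k) :=
    fun m n hmn => biInter_subset_biInter_left (Finset.range_mono hmn)
  exact ⟨outerLim_argminOn_nonempty hAS hcc hfeas hlcω (hεn_pos · ω) hεω,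
    outerLim_argminOn_subset (fun n => isClosed_biInter fun k _ => hM_closed _) hS_anti hAS hSA
      hcc (hεn_pos · ω) hεω⟩

/-- scenario approach. Under feasibility and eventual level-compactness,
for measurable `ε n > 0` with `ε n ω → 0` a.s., for `P`-a.e. `ω` the outer limit of
the `ε n ω`-argmins of `g n` on `S n ω` is nonempty and contained in the argmin
of `g` on `M_as`. -/
theorem scenario_argmin_convergence {X : Type*} [MetricSpace X] [PolishSpace X]
    {Ξ : Type*} [MeasurableSpace Ξ] (ℙ : Measure Ξ) [IsProbabilityMeasure ℙ] [ℙ.IsComplete]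
    (P : Measure (ℕ → Ξ)) [IsProbabilityMeasure P] (hP : IsProductMeasure P ℙ)
    (M : Ξ → Set X) (hM_closed : ∀ ξ, IsClosed (M ξ)) (hM_meas : MeasurableMultifun M)
    (g : X → EReal) (gn : ℕ → X → EReal)
    (hg_noBot : ∀ x, g x ≠ ⊥) (hgn_noBot : ∀ n x, gn n x ≠ ⊥)
    (hg_lsc : LowerSemicontinuous g) (hgn_lsc : ∀ n, LowerSemicontinuous (gn n))
    (hcc : ContConv gn g)
    (hfeas : ∃ x ∈ {y : X | ∀ᵐ ζ ∂ℙ, y ∈ M ζ}, g x < ⊤)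
    (hlc : ∀ᵐ ω ∂P, EvLevelCompact gn (fun n => ⋂ k ∈ Finset.range n, M (ω k)))
    (εn : ℕ → (ℕ → Ξ) → ℝ) (hεn_meas : ∀ n, Measurable (εn n))
    (hεn_pos : ∀ n ω, 0 < εn n ω)
    (hεn_to0 : ∀ᵐ ω ∂P, Tendsto (fun n => εn n ω) atTop (𝓝 0)) :
    ∀ᵐ ω ∂P,
      (outerLim (fun n =>
          argminOn (gn n) (⋂ k ∈ Finset.range n, M (ω k)) (εn n ω))).Nonempty ∧
      outerLim (fun n =>
          argminOn (gn n) (⋂ k ∈ Finset.range n, M (ω k)) (εn n ω)) ⊆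
        argminOn g {y : X | ∀ᵐ ζ ∂ℙ, y ∈ M ζ} 0 :=
  scenario_argmin_convergence_general ℙ P hP M hM_closed hM_meas g gn hcc hfeas hlc εn hεn_pos
    hεn_to0
end
end
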